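/- arXiv:2411.14049 — 4 statements merged into one kernel-verified Lean document; each statement's English description precedes it below -/
import Mathlib

section
/- Let (X, μ) be a measure space, f : X → ℝ a measurable function with 0 ≤ f ≤ 1, and H a nonempty set of measurable functions X → ℝ taking values in [0, 1]. Let A ⊆ B be measurable subsets of X with μ(B) < ∞, and for a measurable set S define ε_S(h) = ∫_S |h(x) − f(x)| dμ(x). Suppose there exists h₀ ∈ H with ε_A(h₀) = ⨅_{h ∈ H} ε_A(h) and ε_{B \ A}(h₀) = ⨅_{h ∈ H} ε_{B \ A}(h). Then every h ∈ H satisfying ε_B(h) = ⨅_{h' ∈ H} ε_B(h') also satisfies ε_A(h) = ⨅_{h' ∈ H} ε_A(h'). -/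
open MeasureTheory

/-!
Splitting `B = A ∪ (B \ A)` gives `ε_B = ε_A + ε_{B \ A}` on `H` (all errors are finite since
`|h - f| ≤ 1` and `μ B < ∞`). If `h` minimizes the sum while `h₀` minimizes both summands, then
`ε_A h + ε_{B \ A} h ≤ ε_A h₀ + ε_{B \ A} h₀` and `ε_{B \ A} h₀ ≤ ε_{B \ A} h` force
`ε_A h ≤ ε_A h₀`.
-/

theorem isMinOn_iff_apply_eq_iInf {α β : Type*} [ConditionallyCompleteLinearOrder α]
    {f : β → α} {s : Set β} {a : β} (hf : BddBelow (Set.range fun x : s => f x)) (ha : a ∈ s) :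
    IsMinOn f s a ↔ f a = ⨅ x : s, f x :=
  ⟨fun h => (h.iInf_eq ha).symm, fun h x hx => h ▸ ciInf_le hf ⟨x, hx⟩⟩

theorem IsMinOn.of_isMinOn_add_left {α β : Type*} [AddCommMonoid α] [PartialOrder α]
    [IsOrderedCancelAddMonoid α] {f g : β → α} {s : Set β} {a b : β}
    (hf : IsMinOn f s a) (hg : IsMinOn g s a) (hfg : IsMinOn (f + g) s b)
    (ha : a ∈ s) (hb : b ∈ s) : IsMinOn f s b := by
  have hba : f b + g b ≤ f a + g b := (hfg ha).trans (add_le_add le_rfl (hg hb))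
  exact fun x hx => (le_of_add_le_add_right hba).trans (hf hx)

theorem integrableOn_abs_sub_of_unit_bounds {X : Type*} [MeasurableSpace X] {μ : Measure X}
    {f g : X → ℝ} {S : Set X} (hf : Measurable f) (hg : Measurable g)
    (hf0 : ∀ x, 0 ≤ f x) (hf1 : ∀ x, f x ≤ 1) (hg0 : ∀ x, 0 ≤ g x) (hg1 : ∀ x, g x ≤ 1)
    (hμS : μ S < ⊤) :
    IntegrableOn (fun x => |g x - f x|) S μ := by
  refine Integrable.mono' (g := fun _ => (1 : ℝ)) (integrableOn_const hμS.ne) (hg.sub hf).abs.aestronglyMeasurable ?_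
  filter_upwards with x
  rw [Real.norm_eq_abs, abs_abs, abs_sub_le_iff]
  constructor <;> linarith [hf0 x, hf1 x, hg0 x, hg1 x]

/-- The paper's `ε_S(h)`. -/
noncomputable def disagreementError {X : Type*} [MeasurableSpace X] (μ : Measure X)
    (f : X → ℝ) (S : Set X) (h : X → ℝ) : ℝ :=
  ∫ x in S, |h x - f x| ∂μ

section disagreementError

variable {X : Type*} [MeasurableSpace X] {μ : Measure X} {f : X → ℝ}

theorem disagreementError_nonneg (S : Set X) (h : X → ℝ) : 0 ≤ disagreementError μ f S h :=
  integral_nonneg fun _ => abs_nonneg _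

theorem bddBelow_range_disagreementError (S : Set X) (H : Set (X → ℝ)) :
    BddBelow (Set.range fun h : H => disagreementError μ f S h) :=
  ⟨0, by rintro _ ⟨h, rfl⟩; exact disagreementError_nonneg S h⟩

theorem disagreementError_eq_add_sdiff {A B : Set X} {h : X → ℝ} (hA : MeasurableSet A)
    (hAB : A ⊆ B) (hint : IntegrableOn (fun x => |h x - f x|) B μ) :
    disagreementError μ f B h = disagreementError μ f A h + disagreementError μ f (B \ A) h := by
  rw [disagreementError, disagreementError, disagreementError, setIntegral_sdiff hA hint hAB]
  ring

end disagreementError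

theorem stmt_2_general {X : Type*} [MeasurableSpace X] (μ : Measure X)
    (f : X → ℝ) (hf : Measurable f) (hf0 : ∀ x, 0 ≤ f x) (hf1 : ∀ x, f x ≤ 1)
    (H : Set (X → ℝ))
    (hH : ∀ h ∈ H, Measurable h ∧ (∀ x, 0 ≤ h x) ∧ (∀ x, h x ≤ 1))
    (A B : Set X) (hAm : MeasurableSet A)
    (hAB : A ⊆ B) (hμB : μ B < ⊤)
    (h₀ : X → ℝ) (h₀H : h₀ ∈ H)
    (h₀A : ∫ x in A, |h₀ x - f x| ∂μ =
      ⨅ h : H, ∫ x in A, |(h : X → ℝ) x - f x| ∂μ)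
    (h₀BA : ∫ x in B \ A, |h₀ x - f x| ∂μ =
      ⨅ h : H, ∫ x in B \ A, |(h : X → ℝ) x - f x| ∂μ) :
    ∀ h ∈ H,
      (∫ x in B, |h x - f x| ∂μ = ⨅ h' : H, ∫ x in B, |(h' : X → ℝ) x - f x| ∂μ) →
      ∫ x in A, |h x - f x| ∂μ = ⨅ h' : H, ∫ x in A, |(h' : X → ℝ) x - f x| ∂μ := by
  intro h hh hB
  set ε := disagreementError μ f
  have hsplit : ∀ g ∈ H, ε B g = ε A g + ε (B \ A) g := fun g hg =>
    have ⟨hgm, hg0, hg1⟩ := hH g hg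
    disagreementError_eq_add_sdiff hAm hAB
      (integrableOn_abs_sub_of_unit_bounds hf hgm hf0 hf1 hg0 hg1 hμB)
  have hminIff {S : Set X} {g : X → ℝ} (hg : g ∈ H) :=
    isMinOn_iff_apply_eq_iInf (bddBelow_range_disagreementError (μ := μ) (f := f) S H) hg
  have hminB : IsMinOn (ε A + ε (B \ A)) H h := isMinOn_iff.mpr fun g hg => by
    rw [Pi.add_apply, Pi.add_apply, ← hsplit h hh, ← hsplit g hg]
    exact isMinOn_iff.mp ((hminIff hh).mpr hB) g hg
  exact (hminIff hh).mp <|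
    ((hminIff h₀H).mpr h₀A).of_isMinOn_add_left ((hminIff h₀H).mpr h₀BA) hminB h₀H hh

/-- If some `h₀ ∈ H` simultaneously minimizes the disagreement error
`ε_S(h) = ∫_S |h − f| dμ` on `A` and on `B \ A` (where `A ⊆ B`, `μ B < ∞`),
then every `h ∈ H` minimizing the error on `B` also minimizes it on `A`. -/
theorem stmt_2 {X : Type*} [MeasurableSpace X] (μ : Measure X)
    (f : X → ℝ) (hf : Measurable f) (hf0 : ∀ x, 0 ≤ f x) (hf1 : ∀ x, f x ≤ 1)
    (H : Set (X → ℝ)) [Nonempty ↥H]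
    (hH : ∀ h ∈ H, Measurable h ∧ (∀ x, 0 ≤ h x) ∧ (∀ x, h x ≤ 1))
    (A B : Set X) (hAm : MeasurableSet A) (hBm : MeasurableSet B)
    (hAB : A ⊆ B) (hμB : μ B < ⊤)
    (h₀ : X → ℝ) (h₀H : h₀ ∈ H)
    (h₀A : ∫ x in A, |h₀ x - f x| ∂μ =
      ⨅ h : H, ∫ x in A, |(h : X → ℝ) x - f x| ∂μ)
    (h₀BA : ∫ x in B \ A, |h₀ x - f x| ∂μ =
      ⨅ h : H, ∫ x in B \ A, |(h : X → ℝ) x - f x| ∂μ) :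
    ∀ h ∈ H,
      (∫ x in B, |h x - f x| ∂μ = ⨅ h' : H, ∫ x in B, |(h' : X → ℝ) x - f x| ∂μ) →
      ∫ x in A, |h x - f x| ∂μ = ⨅ h' : H, ∫ x in A, |(h' : X → ℝ) x - f x| ∂μ :=
  stmt_2_general μ f hf hf0 hf1 H hH A B hAm hAB hμB h₀ h₀H h₀A h₀BA
end

section
/- Let λ be a σ-finite measure on a measurable space X, let φ, ψ : X → ℝ≥0 be measurable with μ = λ.withDensity φ and ν = λ.withDensity ψ both probability measures, and let f : X → ℝ be measurable with 0 ≤ f ≤ 1. Let H be a nonempty set of measurable functions X → ℝ with values in [0, 1], write ε_μ(g, g') = ∫ |g − g'| dμ and ε_ν(g, g') = ∫ |g − g'| dν, and let M_ν = {h ∈ H : ε_ν(h, f) = ⨅_{h' ∈ H} ε_ν(h', f)}. Suppose: (i) h*_aux ∈ M_ν; (ii) h*_ood ∈ H satisfies ε_μ(h*_ood, f) = ⨅_{h' ∈ H} ε_μ(h', f) and h*_ood ∈ M_ν; (iii) ⨅_{h' ∈ H} ε_ν(h', f) ≤ ⨅_{h' ∈ H} ε_μ(h', f). Then for every h ∈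 H: ε_μ(h, f) ≤ ε_ν(h, f) + ∫ |φ(x) − ψ(x)| · |h(x) − h*_aux(x)| dλ(x) + (⨆_{h' ∈ M_ν} ε_μ(h', h*_ood)) + 4 · ⨅_{h' ∈ H} ε_μ(h', f). -/
open MeasureTheory

private lemma integ01 {X : Type*} [MeasurableSpace X] (m : Measure X)
    [IsFiniteMeasure m] {g g' : X → ℝ} (hg : Measurable g) (hg' : Measurable g')
    (h0 : ∀ x, 0 ≤ g x) (h1 : ∀ x, g x ≤ 1)
    (h0' : ∀ x, 0 ≤ g' x) (h1' : ∀ x, g' x ≤ 1) :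
    Integrable (fun x => |g x - g' x|) m :=
  (integrable_const 2).mono' ((hg.sub hg').abs.aestronglyMeasurable)
    (Filter.Eventually.of_forall fun x => by
      rw [Real.norm_eq_abs, abs_abs, abs_sub_le_iff]
      constructor <;> nlinarith [h0 x, h1 x, h0' x, h1' x])

private lemma tri01 {X : Type*} [MeasurableSpace X] (m : Measure X) [IsFiniteMeasure m]
    {g1 g2 g3 : X → ℝ} (m1 : Measurable g1) (m2 : Measurable g2) (m3 : Measurable g3)
    (a1 : ∀ x, 0 ≤ g1 x) (b1 : ∀ x, g1 x ≤ 1)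
    (a2 : ∀ x, 0 ≤ g2 x) (b2 : ∀ x, g2 x ≤ 1)
    (a3 : ∀ x, 0 ≤ g3 x) (b3 : ∀ x, g3 x ≤ 1) :
    ∫ x, |g1 x - g3 x| ∂m ≤ (∫ x, |g1 x - g2 x| ∂m) + ∫ x, |g2 x - g3 x| ∂m := by
  have I12 := integ01 m m1 m2 a1 b1 a2 b2
  have I23 := integ01 m m2 m3 a2 b2 a3 b3
  calc ∫ x, |g1 x - g3 x| ∂m
      ≤ ∫ x, (|g1 x - g2 x| + |g2 x - g3 x|) ∂m :=
        integral_mono (integ01 m m1 m3 a1 b1 a3 b3) (I12.add I23)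
          (fun x => abs_sub_le _ _ _)
    _ = (∫ x, |g1 x - g2 x| ∂m) + ∫ x, |g2 x - g3 x| ∂m := integral_add I12 I23

/-- Population-level content of the paper's Theorem 1 (Generalization Bound of
OOD Detector): the test-time error `ε_μ(h, f)` is bounded by the training error
`ε_ν(h, f)`, the reducible error `∫ |φ − ψ|·|h − h*_aux| dλ`, the distribution
shift error `sup_{h' ∈ M_ν} ε_μ(h', h*_ood)`, and `β = 4·inf_{h'} ε_μ(h', f)`. -/
theorem stmt_6 {X : Type*} [MeasurableSpace X] (lam : Measure X) [SigmaFinite lam]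
    (φ ψ : X → NNReal) (hφ : Measurable φ) (hψ : Measurable ψ)
    (μ ν : Measure X)
    (hμ : μ = lam.withDensity fun x => (φ x : ENNReal))
    (hν : ν = lam.withDensity fun x => (ψ x : ENNReal))
    [IsProbabilityMeasure μ] [IsProbabilityMeasure ν]
    (f : X → ℝ) (hf : Measurable f) (hf0 : ∀ x, 0 ≤ f x) (hf1 : ∀ x, f x ≤ 1)
    (H : Set (X → ℝ)) [Nonempty ↥H]
    (hH : ∀ h ∈ H, Measurable h ∧ (∀ x, 0 ≤ h x) ∧ (∀ x, h x ≤ 1))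
    -- (i): `h*_aux` belongs to the set `M_ν` of training-optimal hypotheses
    (haux : X → ℝ) (hauxH : haux ∈ H)
    (hauxMin : ∫ x, |haux x - f x| ∂ν = ⨅ h' : H, ∫ x, |(h' : X → ℝ) x - f x| ∂ν)
    -- (ii): `h*_ood` is optimal for `μ` and belongs to `M_ν`
    (hood : X → ℝ) (hoodH : hood ∈ H)
    (hoodMinμ : ∫ x, |hood x - f x| ∂μ = ⨅ h' : H, ∫ x, |(h' : X → ℝ) x - f x| ∂μ)
    (hoodMinν : ∫ x, |hood x - f x| ∂ν = ⨅ h' : H, ∫ x, |(h' : X → ℝ) x - f x| ∂ν)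
    -- (iii): the best training error is at most the best test error
    (hinf : (⨅ h' : H, ∫ x, |(h' : X → ℝ) x - f x| ∂ν) ≤
      ⨅ h' : H, ∫ x, |(h' : X → ℝ) x - f x| ∂μ) :
    ∀ h ∈ H,
      ∫ x, |h x - f x| ∂μ ≤
        (∫ x, |h x - f x| ∂ν)
        + (∫ x, |(φ x : ℝ) - (ψ x : ℝ)| * |h x - haux x| ∂lam)
        + sSup ((fun h' : X → ℝ => ∫ x, |h' x - hood x| ∂μ) ''
            {h' | h' ∈ H ∧
              ∫ x, |h' x - f x| ∂ν = ⨅ h'' : H, ∫ x, |(h'' : X → ℝ) x - f x| ∂ν})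
        + 4 * ⨅ h' : H, ∫ x, |(h' : X → ℝ) x - f x| ∂μ := by
  intro h hHmem
  obtain ⟨hhm, hh0, hh1⟩ := hH h hHmem
  obtain ⟨ham, ha0, ha1⟩ := hH haux hauxH
  obtain ⟨hom, ho0, ho1⟩ := hH hood hoodH
  set infμ := ⨅ h' : H, ∫ x, |(h' : X → ℝ) x - f x| ∂μ with hinfμ
  set infν := ⨅ h' : H, ∫ x, |(h' : X → ℝ) x - f x| ∂ν with hinfν
  have infμ_nonneg : 0 ≤ infμ :=
    Real.iInf_nonneg fun h' => integral_nonneg fun x => abs_nonneg _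
  -- step 1 : triangle on μ
  have step1 : ∫ x, |h x - f x| ∂μ ≤
      (∫ x, |h x - haux x| ∂μ) + (∫ x, |haux x - hood x| ∂μ) + ∫ x, |hood x - f x| ∂μ := by
    have t1 := tri01 μ hhm hom hf hh0 hh1 ho0 ho1 hf0 hf1
    have t2 := tri01 μ hhm ham hom hh0 hh1 ha0 ha1 ho0 ho1
    calc ∫ x, |h x - f x| ∂μ
        ≤ (∫ x, |h x - hood x| ∂μ) + ∫ x, |hood x - f x| ∂μ := t1
      _ ≤ (∫ x, |h x - haux x| ∂μ) + (∫ x, |haux x - hood x| ∂μ) + ∫ x, |hood x - f x| ∂μ := by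
          linarith
  -- step 2 : reducible error
  have Iμ : Integrable (fun x => |h x - haux x|) μ := integ01 μ hhm ham hh0 hh1 ha0 ha1
  have Iν : Integrable (fun x => |h x - haux x|) ν := integ01 ν hhm ham hh0 hh1 ha0 ha1
  have Iφ : Integrable (fun x => φ x • |h x - haux x|) lam := by
    rw [← integrable_withDensity_iff_integrable_smul hφ, ← hμ]; exact Iμ
  have Iψ : Integrable (fun x => ψ x • |h x - haux x|) lam := by
    rw [← integrable_withDensity_iff_integrable_smul hψ, ← hν]; exact Iν
  have IR : Integrable (fun x => |(φ x : ℝ) - (ψ x : ℝ)| * |h x - haux x|) lam := by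
    refine (Iφ.add Iψ).mono' ?_ (Filter.Eventually.of_forall fun x => ?_)
    · exact ((hφ.coe_nnreal_real.sub hψ.coe_nnreal_real).abs.mul
        ((hhm.sub ham).abs)).aestronglyMeasurable
    · simp only [Real.norm_eq_abs, NNReal.smul_def, smul_eq_mul, Pi.add_apply]
      rw [abs_mul, abs_abs, abs_abs]
      have : |(φ x : ℝ) - (ψ x : ℝ)| ≤ (φ x : ℝ) + (ψ x : ℝ) := by
        rw [abs_sub_le_iff]
        constructor <;> nlinarith [(φ x).coe_nonneg, (ψ x).coe_nonneg]
      nlinarith [abs_nonneg (h x - haux x), (φ x).coe_nonneg, (ψ x).coe_nonneg]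
  have step2 : ∫ x, |h x - haux x| ∂μ ≤
      (∫ x, |h x - haux x| ∂ν) + ∫ x, |(φ x : ℝ) - (ψ x : ℝ)| * |h x - haux x| ∂lam := by
    rw [hμ, hν, integral_withDensity_eq_integral_smul hφ, integral_withDensity_eq_integral_smul hψ]
    calc ∫ x, φ x • |h x - haux x| ∂lam
        ≤ ∫ x, (ψ x • |h x - haux x| + |(φ x : ℝ) - (ψ x : ℝ)| * |h x - haux x|) ∂lam := by
          refine integral_mono Iφ (Iψ.add IR) fun x => ?_
          simp only [NNReal.smul_def, smul_eq_mul]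
          nlinarith [le_abs_self ((φ x : ℝ) - (ψ x : ℝ)), abs_nonneg (h x - haux x)]
      _ = (∫ x, ψ x • |h x - haux x| ∂lam) +
            ∫ x, |(φ x : ℝ) - (ψ x : ℝ)| * |h x - haux x| ∂lam := integral_add Iψ IR
  -- step 3 : training triangle
  have step3 : ∫ x, |h x - haux x| ∂ν ≤ (∫ x, |h x - f x| ∂ν) + infμ := by
    have t := tri01 ν hhm hf ham hh0 hh1 hf0 hf1 ha0 ha1
    have : ∫ x, |f x - haux x| ∂ν = ∫ x, |haux x - f x| ∂ν := by
      simp_rw [abs_sub_comm]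
    rw [this, hauxMin] at t
    exact t.trans (by linarith)
  -- step 4 : distribution shift
  have step4 : ∫ x, |haux x - hood x| ∂μ ≤
      sSup ((fun h' : X → ℝ => ∫ x, |h' x - hood x| ∂μ) ''
        {h' | h' ∈ H ∧ ∫ x, |h' x - f x| ∂ν = infν}) := by
    refine le_csSup ⟨2, ?_⟩ ⟨haux, ⟨hauxH, hauxMin⟩, rfl⟩
    rintro y ⟨h', ⟨h'H, -⟩, rfl⟩
    obtain ⟨h'm, h'0, h'1⟩ := hH h' h'H
    calc ∫ x, |h' x - hood x| ∂μ ≤ ∫ _x, (2 : ℝ) ∂μ := by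
          refine integral_mono (integ01 μ h'm hom h'0 h'1 ho0 ho1) (integrable_const 2)
            fun x => ?_
          rw [abs_sub_le_iff]; constructor <;> nlinarith [h'0 x, h'1 x, ho0 x, ho1 x]
      _ = 2 := by simp
  -- combine
  have step5 : ∫ x, |hood x - f x| ∂μ = infμ := hoodMinμ
  linarith [step1, step2, step3, step4, step5, infμ_nonneg]
end

section
/- Let (X, μ) be a measure space with μ(X) < ∞, let f, f* : X → ℝ be measurable functions with values in [0, 1], and let H be a nonempty set of measurable functions X → ℝ with values in [0, 1]. Let A ⊆ B be measurable subsets of X, and for a measurable set S define ε_S(h) = ∫_S |h(x) − f(x)| dμ(x). Suppose there exists h₀ ∈ H with ε_A(h₀) = ⨅_{h ∈ H} ε_A(h) and ε_{B \ A}(h₀) = ⨅_{h ∈ H} ε_{B \ A}(h). Let M_A = {h ∈ H : ε_A(h) = ⨅_{h' ∈ H} ε_A(h')} and M_B = {h ∈ H : ε_B(h) = ⨅_{h' ∈ H} ε_B(h')}. Then ⨆_{h ∈ M_B} ∫ |h(x) − f*(x)| dμ(x) ≤ ⨆_{h ∈ M_A} ∫ |h(x) − f*(x)| dμ(x). -/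
open MeasureTheory

/-! Since `A ⊆ B`, the error on `B` splits as `ε_B = ε_A + ε_{B \ A}`. The common minimizer `h₀`
of both summands therefore minimizes `ε_B`, and any minimizer `h` of `ε_B` satisfies
`ε_A h + ε_{B \ A} h₀ ≤ ε_A h + ε_{B \ A} h ≤ ε_A h₀ + ε_{B \ A} h₀`, so it also minimizes `ε_A`.
Hence `M_B ⊆ M_A` with `M_B` nonempty, and since every `∫ |h - f*| dμ` is at most `μ(X)`, the
supremum over `M_B` is at most the supremum over `M_A`. -/

open Set

section Minimizers

variable {α β : Type*} {s : Set α} {a b : α}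

theorem Set.EqOn.isMinOn_iff [Preorder β] {f g : α → β} (hfg : EqOn f g s) (ha : a ∈ s) :
    IsMinOn f s a ↔ IsMinOn g s a :=
  hfg.eventuallyEq.isMinFilter_iff (hfg ha)

theorem IsMinOn.of_add_of_isMinOn [AddCommMonoid β] [PartialOrder β] [IsOrderedCancelAddMonoid β]
    {e₁ e₂ : α → β} (hb : IsMinOn (fun x => e₁ x + e₂ x) s b) (hbs : b ∈ s)
    (ha₁ : IsMinOn e₁ s a) (ha₂ : IsMinOn e₂ s a) (has : a ∈ s) : IsMinOn e₁ s b :=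
  fun x hx => le_of_add_le_add_right <| calc
    e₁ b + e₂ a ≤ e₁ b + e₂ b := add_le_add_right (ha₂ hbs) _
    _ ≤ e₁ a + e₂ a := hb has
    _ ≤ e₁ x + e₂ a := add_le_add_left (ha₁ hx) _

theorem isMinOn_iff_eq_iInf [ConditionallyCompleteLinearOrder β] {e : α → β}
    (he : BddBelow (e '' s)) (ha : a ∈ s) : IsMinOn e s a ↔ e a = ⨅ x : s, e x :=
  ⟨fun h => (h.iInf_eq ha).symm, fun h x hx => h ▸ ciInf_le (image_eq_range e s ▸ he) ⟨x, hx⟩⟩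

end Minimizers

section UnitIntervalValued

variable {X : Type*} {g h : X → ℝ}

theorem norm_abs_sub_le_one (hg0 : ∀ x, 0 ≤ g x) (hg1 : ∀ x, g x ≤ 1) (hh0 : ∀ x, 0 ≤ h x)
    (hh1 : ∀ x, h x ≤ 1) (x : X) : ‖|g x - h x|‖ ≤ 1 := by
  rw [Real.norm_eq_abs, abs_abs]
  exact abs_sub_le_of_nonneg_of_le (hg0 x) (hg1 x) (hh0 x) (hh1 x)

variable [MeasurableSpace X] {μ : Measure X} [IsFiniteMeasure μ]

theorem integrable_abs_sub_of_unit_bounds (hg : Measurable g) (hh : Measurable h)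
    (hg0 : ∀ x, 0 ≤ g x) (hg1 : ∀ x, g x ≤ 1) (hh0 : ∀ x, 0 ≤ h x) (hh1 : ∀ x, h x ≤ 1) :
    Integrable (fun x => |g x - h x|) μ :=
  .of_bound (hg.sub hh).abs.aestronglyMeasurable 1 <|
    ae_of_all _ (norm_abs_sub_le_one hg0 hg1 hh0 hh1)

theorem integral_abs_sub_le_measureReal_univ
    (hg0 : ∀ x, 0 ≤ g x) (hg1 : ∀ x, g x ≤ 1) (hh0 : ∀ x, 0 ≤ h x) (hh1 : ∀ x, h x ≤ 1) :
    ∫ x, |g x - h x| ∂μ ≤ μ.real univ :=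
  calc ∫ x, |g x - h x| ∂μ ≤ ‖∫ x, |g x - h x| ∂μ‖ := Real.le_norm_self _
    _ ≤ 1 * μ.real univ :=
      norm_integral_le_of_norm_le_const (ae_of_all _ (norm_abs_sub_le_one hg0 hg1 hh0 hh1))
    _ = μ.real univ := one_mul _

end UnitIntervalValued

theorem stmt_8_general {X : Type*} [MeasurableSpace X] (μ : Measure X) [IsFiniteMeasure μ]
    (f fstar : X → ℝ) (hf : Measurable f) (hf0 : ∀ x, 0 ≤ f x) (hf1 : ∀ x, f x ≤ 1)
    (hfs0 : ∀ x, 0 ≤ fstar x) (hfs1 : ∀ x, fstar x ≤ 1)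
    (H : Set (X → ℝ))
    (hH : ∀ h ∈ H, Measurable h ∧ (∀ x, 0 ≤ h x) ∧ (∀ x, h x ≤ 1))
    (A B : Set X) (hAm : MeasurableSet A) (hAB : A ⊆ B)
    (h₀ : X → ℝ) (h₀H : h₀ ∈ H)
    (h₀A : ∫ x in A, |h₀ x - f x| ∂μ =
      ⨅ h : H, ∫ x in A, |(h : X → ℝ) x - f x| ∂μ)
    (h₀BA : ∫ x in B \ A, |h₀ x - f x| ∂μ =
      ⨅ h : H, ∫ x in B \ A, |(h : X → ℝ) x - f x| ∂μ) :
    sSup ((fun h : X → ℝ => ∫ x, |h x - fstar x| ∂μ) ''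
        {h | h ∈ H ∧
          ∫ x in B, |h x - f x| ∂μ = ⨅ h' : H, ∫ x in B, |(h' : X → ℝ) x - f x| ∂μ}) ≤
      sSup ((fun h : X → ℝ => ∫ x, |h x - fstar x| ∂μ) ''
        {h | h ∈ H ∧
          ∫ x in A, |h x - f x| ∂μ = ⨅ h' : H, ∫ x in A, |(h' : X → ℝ) x - f x| ∂μ}) := by
  set ε : Set X → (X → ℝ) → ℝ := fun S h => ∫ x in S, |h x - f x| ∂μ
  have hmin (S : Set X) {h : X → ℝ} (hh : h ∈ H) :
      IsMinOn (ε S) H h ↔ ε S h = ⨅ h' : H, ε S h' :=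
    isMinOn_iff_eq_iInf ⟨0, by rintro _ ⟨g, -, rfl⟩; exact integral_nonneg fun _ => abs_nonneg _⟩ hh
  have hsplit : EqOn (ε B) (fun h => ε A h + ε (B \ A) h) H := fun h hh =>
    eq_add_of_sub_eq' <| (setIntegral_sdiff hAm (integrable_abs_sub_of_unit_bounds (hH h hh).1 hf
      (hH h hh).2.1 (hH h hh).2.2 hf0 hf1).integrableOn hAB).symm
  have h₀minA := (hmin A h₀H).2 h₀A
  have h₀minBA := (hmin (B \ A) h₀H).2 h₀BA
  have h₀minB : IsMinOn (ε B) H h₀ := (hsplit.isMinOn_iff h₀H).2 (h₀minA.add h₀minBA)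
  have hMBA : {h | h ∈ H ∧ ε B h = ⨅ h' : H, ε B h'} ⊆
      {h | h ∈ H ∧ ε A h = ⨅ h' : H, ε A h'} := fun h ⟨hh, hB⟩ =>
    ⟨hh, (hmin A hh).1 <| ((hsplit.isMinOn_iff hh).1 ((hmin B hh).2 hB)).of_add_of_isMinOn hh
      h₀minA h₀minBA h₀H⟩
  refine csSup_le_csSup ⟨μ.real univ, ?_⟩ ⟨_, h₀, ⟨h₀H, (hmin B h₀H).1 h₀minB⟩, rfl⟩
    (image_mono hMBA)
  rintro _ ⟨h, ⟨hh, -⟩, rfl⟩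
  exact integral_abs_sub_le_measureReal_univ (hH h hh).2.1 (hH h hh).2.2 hfs0 hfs1

/-- Integral form of the paper's Theorem 2: if some `h₀ ∈ H` simultaneously
minimizes the disagreement error on `A` and on `B \ A` (with `A ⊆ B`), then the
worst-case disagreement `sup ∫ |h − f*| dμ` over hypotheses optimal on `B` is
at most the corresponding worst case over hypotheses optimal on `A`. -/
theorem stmt_8 {X : Type*} [MeasurableSpace X] (μ : Measure X) [IsFiniteMeasure μ]
    (f fstar : X → ℝ) (hf : Measurable f) (hf0 : ∀ x, 0 ≤ f x) (hf1 : ∀ x, f x ≤ 1)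
    (hfs : Measurable fstar) (hfs0 : ∀ x, 0 ≤ fstar x) (hfs1 : ∀ x, fstar x ≤ 1)
    (H : Set (X → ℝ)) [Nonempty ↥H]
    (hH : ∀ h ∈ H, Measurable h ∧ (∀ x, 0 ≤ h x) ∧ (∀ x, h x ≤ 1))
    (A B : Set X) (hAm : MeasurableSet A) (hBm : MeasurableSet B) (hAB : A ⊆ B)
    (h₀ : X → ℝ) (h₀H : h₀ ∈ H)
    (h₀A : ∫ x in A, |h₀ x - f x| ∂μ =
      ⨅ h : H, ∫ x in A, |(h : X → ℝ) x - f x| ∂μ)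
    (h₀BA : ∫ x in B \ A, |h₀ x - f x| ∂μ =
      ⨅ h : H, ∫ x in B \ A, |(h : X → ℝ) x - f x| ∂μ) :
    sSup ((fun h : X → ℝ => ∫ x, |h x - fstar x| ∂μ) ''
        {h | h ∈ H ∧
          ∫ x in B, |h x - f x| ∂μ = ⨅ h' : H, ∫ x in B, |(h' : X → ℝ) x - f x| ∂μ}) ≤
      sSup ((fun h : X → ℝ => ∫ x, |h x - fstar x| ∂μ) ''
        {h | h ∈ H ∧
          ∫ x in A, |h x - f x| ∂μ = ⨅ h' : H, ∫ x in A, |(h' : X → ℝ) x - f x| ∂μ}) :=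
  stmt_8_general μ f fstar hf hf0 hf1 hfs0 hfs1 H hH A B hAm hAB h₀ h₀H h₀A h₀BA
end

section
/- Let E be a real vector space, I an index type, and s_i ⊆ E for i ∈ I a family of subsets with union s = ⋃_{i ∈ I} s_i. Define the mixup hull G(s) = {λ • x + (1 − λ) • y : x, y ∈ s, λ ∈ ℝ, 0 ≤ λ ≤ 1}. Let ζ ∈ ℝ with 0 < ζ < 1/2, and suppose (semantic change under mixup) that for all i ≠ j, all x ∈ s_i, all y ∈ s_j, and all λ with ζ < λ < 1 − ζ, the point λ • x + (1 − λ) • y does not belong to s. If there exist indices i ≠ j with s_i nonempty and s_j nonempty, then s ⊆ G(s) and s ≠ G(s). -/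
/-- The mixup hull of `s`: all points `λ • x + (1 − λ) • y` with `x, y ∈ s` and
`λ ∈ [0, 1]`. -/
def mixupHull {E : Type*} [AddCommGroup E] [Module ℝ E] (s : Set E) : Set E :=
  {z | ∃ x ∈ s, ∃ y ∈ s, ∃ l : ℝ, 0 ≤ l ∧ l ≤ 1 ∧ z = l • x + (1 - l) • y}

/-- Lemma 1 (Diversity Enhancement with Mixup): if mixing points of distinct
semantic groups with weight `λ ∈ (ζ, 1 − ζ)` always leaves the union `s`, and
at least two distinct groups are nonempty, then the mixup hull strictly
contains `s`. -/
theorem stmt_11 {E : Type*} [AddCommGroup E] [Module ℝ E] {I : Type*}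
    (s : I → Set E) (ζ : ℝ) (hζ0 : 0 < ζ) (hζ : ζ < 1 / 2)
    (hmix : ∀ i j, i ≠ j → ∀ x ∈ s i, ∀ y ∈ s j, ∀ l : ℝ, ζ < l → l < 1 - ζ →
      l • x + (1 - l) • y ∉ ⋃ k, s k)
    (hex : ∃ i j, i ≠ j ∧ (s i).Nonempty ∧ (s j).Nonempty) :
    (⋃ i, s i) ⊆ mixupHull (⋃ i, s i) ∧ (⋃ i, s i) ≠ mixupHull (⋃ i, s i) := by
  obtain ⟨i, j, hij, ⟨x, hx⟩, ⟨y, hy⟩⟩ := hex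
  have hsub : (⋃ i, s i) ⊆ mixupHull (⋃ i, s i) := by
    intro z hz
    exact ⟨z, hz, z, hz, 1, by norm_num⟩
  refine ⟨hsub, ?_⟩
  intro heq
  have hmem : (1/2 : ℝ) • x + (1 - 1/2 : ℝ) • y ∈ mixupHull (⋃ i, s i) :=
    ⟨x, Set.mem_iUnion.2 ⟨i, hx⟩, y, Set.mem_iUnion.2 ⟨j, hy⟩, 1/2, by norm_num⟩
  rw [← heq] at hmem
  exact hmix i j hij x hx y hy (1/2) hζ (by linarith) hmem
end
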